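/- arXiv:2409.17966 — 3 statements merged into one kernel-verified Lean document; each statement's English description precedes it below -/
import Mathlib

section
/- Let f be a probability mass function on the positive integers, F̄(d) = ∑_{m>d} f(m), fix K ∈ ℕ, and set w = ∑_{d=0}^{K} F̄(d). Let D be a random variable with P(D = d) = F̄(d)/w for d ∈ {0,1,…,K}, independent of an i.i.d. sequence Y₁, Y₂, … with pmf f, and let R = {D + Y₁ + ⋯ + Y_j : j ≥ 0} (the j = 0 term being D). Then for every integer m with 1 ≤ m ≤ K, P(R ∩ {1,…,m} ≠ ∅) = (∑_{j=0}^{m−1} F̄(j)) / w. -/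
/-!
Since `Y₁ ≥ 1` almost surely, the renewal set meets `{1, …, m}` exactly when `D ∈ {1, …, m}`,
or `D = 0` and `Y₁ ≤ m`. By independence of `D` and `Y₁` the probability is therefore
`∑_{d=1}^{m} F̄(d)/w + (F̄(0)/w)(1 - F̄(m))`, and `F̄(0) = 1` turns this into `∑_{j<m} F̄(j) / w`.
-/

open MeasureTheory ProbabilityTheory Finset

theorem HasSum.ite_lt {G : Type*} [AddCommGroup G] [TopologicalSpace G] [IsTopologicalAddGroup G]
    {f : ℕ → G} {a : G} (hf : HasSum f a) (d : ℕ) :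
    HasSum (fun m => if d < m then f m else 0) (a - ∑ k ∈ range (d + 1), f k) := by
  rw [← hasSum_nat_add_iff' (d + 1)]
  have hhead : ∑ k ∈ range (d + 1), (if d < k then f k else 0) = 0 :=
    sum_eq_zero fun k hk => if_neg (by simpa [Nat.lt_succ_iff] using hk)
  simpa [hhead, show ∀ n, d < n + (d + 1) by omega] using (hasSum_nat_add_iff' (d + 1)).mpr hf

theorem sum_Icc_one_add_eq_sum_range_add {M : Type*} [AddCommMonoid M] (F : ℕ → M) (m : ℕ) :
    ∑ d ∈ Icc 1 m, F d + F 0 = ∑ d ∈ range m, F d + F m := by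
  rw [← sum_range_succ, range_eq_Ico, Ico_add_one_right_eq_Icc,
    ← insert_Icc_add_one_left_eq_Icc m.zero_le, sum_insert (by simp), add_comm, zero_add]

theorem exists_partial_sum_mem_Icc_iff {z : ℕ → ℕ} (hz : 1 ≤ z 1) (m : ℕ) :
    (∃ k, 1 ≤ k ∧ k ≤ m ∧ ∃ j, z 0 + ∑ i ∈ range j, z (i + 1) = k) ↔
      z 0 ∈ Icc 1 m ∨ (z 0 = 0 ∧ z 1 ≤ m) := by
  constructor
  · rintro ⟨k, hk1, hkm, j, rfl⟩
    rcases j with _ | j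
    · simp_all
    · have hfirst : z 1 ≤ ∑ i ∈ range (j + 1), z (i + 1) :=
        single_le_sum (f := fun i => z (i + 1)) (fun _ _ => Nat.zero_le _) (mem_range.2 j.succ_pos)
      rw [mem_Icc]
      omega
  · rintro (h | ⟨h0, h1⟩)
    · exact ⟨z 0, (mem_Icc.1 h).1, (mem_Icc.1 h).2, 0, by simp⟩
    · exact ⟨z 1, hz, h1, 1, by simp [h0]⟩

theorem measure_exists_partial_sum_mem_Icc {Ω : Type*} [MeasurableSpace Ω] (μ : Measure Ω)
    (Z : ℕ → Ω → ℕ) (hZ0 : Measurable (Z 0)) (hZ1 : Measurable (Z 1))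
    (hindep : IndepFun (Z 0) (Z 1) μ) (hZ1pos : μ {ω | Z 1 ω = 0} = 0) (m : ℕ) :
    μ {ω | ∃ k : ℕ, 1 ≤ k ∧ k ≤ m ∧ ∃ j : ℕ, Z 0 ω + ∑ i ∈ range j, Z (i + 1) ω = k}
      = ∑ d ∈ Icc 1 m, μ {ω | Z 0 ω = d}
        + μ {ω | Z 0 ω = 0} * ∑ k ∈ range (m + 1), μ {ω | Z 1 ω = k} := by
  have hae : ∀ᵐ ω ∂μ, 1 ≤ Z 1 ω := by
    rw [ae_iff]; simpa [Nat.lt_one_iff] using hZ1pos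
  have hevent : {ω | ∃ k : ℕ, 1 ≤ k ∧ k ≤ m ∧ ∃ j : ℕ, Z 0 ω + ∑ i ∈ range j, Z (i + 1) ω = k}
      =ᵐ[μ] (Z 0 ⁻¹' ↑(Icc 1 m) ∪ (Z 0 ⁻¹' {0} ∩ Z 1 ⁻¹' ↑(range (m + 1))) : Set Ω) := by
    refine Filter.eventuallyEq_set.2 ?_
    filter_upwards [hae] with ω hω
    rw [exists_partial_sum_mem_Icc_iff (z := fun i => Z i ω) hω]
    simp
  have hdisj : Disjoint (Z 0 ⁻¹' ↑(Icc 1 m)) (Z 0 ⁻¹' {0} ∩ Z 1 ⁻¹' ↑(range (m + 1))) := by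
    refine Set.disjoint_left.2 fun ω h1 h2 => ?_
    simp_all
  rw [measure_congr hevent,
    measure_union hdisj ((hZ0 (measurableSet_singleton 0)).inter (hZ1 (Finset.measurableSet _))),
    hindep.measure_inter_preimage_eq_mul _ _ (measurableSet_singleton 0) (Finset.measurableSet _),
    ← sum_measure_preimage_singleton _ fun d _ => hZ0 (measurableSet_singleton d),
    ← sum_measure_preimage_singleton _ fun k _ => hZ1 (measurableSet_singleton k)]
  rfl

theorem stmt_9_general {Ω : Type*} [MeasurableSpace Ω] (P : Measure Ω) [IsProbabilityMeasure P]
    (f : ℕ → ℝ) (hf0 : f 0 = 0) (hf_sum : HasSum f 1)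
    (Fbar : ℕ → ℝ) (hFbar : ∀ d, Fbar d = ∑' m : ℕ, if d < m then f m else 0)
    (K : ℕ) (w : ℝ)
    (Z : ℕ → Ω → ℕ) (hZ : ∀ i, Measurable (Z i))
    (hindep : iIndepFun Z P)
    (hD : ∀ d : ℕ, d ≤ K → (P {ω | Z 0 ω = d}).toReal = Fbar d / w)
    (hY : ∀ i k : ℕ, (P {ω | Z (i + 1) ω = k}).toReal = f k)
    (m : ℕ) (hmK : m ≤ K) :
    (P {ω | ∃ k : ℕ, 1 ≤ k ∧ k ≤ m ∧
        ∃ j : ℕ, Z 0 ω + ∑ i ∈ range j, Z (i + 1) ω = k}).toReal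
      = (∑ j ∈ range m, Fbar j) / w := by
  have hcdf : ∀ d, ∑ k ∈ range (d + 1), f k = 1 - Fbar d := by
    intro d
    rw [hFbar, (hf_sum.ite_lt d).tsum_eq, sub_sub_cancel]
  have hFbar0 : Fbar 0 = 1 := by linarith [hcdf 0, show ∑ k ∈ range 1, f k = 0 by simp [hf0]]
  have hZ1pos : P {ω | Z 1 ω = 0} = 0 := by
    have h := hY 0 0
    rw [hf0, ENNReal.toReal_eq_zero_iff] at h
    exact h.resolve_right (measure_ne_top _ _)
  have hfin : ∀ (s : Finset ℕ) (g : ℕ → Set Ω), ∑ i ∈ s, P (g i) ≠ ⊤ :=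
    fun s g => ENNReal.sum_ne_top.2 fun _ _ => measure_ne_top _ _
  rw [measure_exists_partial_sum_mem_Icc P Z (hZ 0) (hZ 1) (hindep.indepFun zero_ne_one) hZ1pos m,
    ENNReal.toReal_add (hfin _ _) (ENNReal.mul_ne_top (measure_ne_top _ _) (hfin _ _)),
    ENNReal.toReal_mul, ENNReal.toReal_sum fun _ _ => measure_ne_top _ _,
    ENNReal.toReal_sum fun _ _ => measure_ne_top _ _,
    sum_congr rfl fun d hd => hD d ((mem_Icc.1 hd).2.trans hmK),
    sum_congr rfl fun k _ => hY 0 k,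
    hD 0 K.zero_le, hcdf, ← sum_div]
  calc (∑ d ∈ Icc 1 m, Fbar d) / w + Fbar 0 / w * (1 - Fbar m)
      = (∑ d ∈ Icc 1 m, Fbar d + Fbar 0 - Fbar m) / w := by rw [hFbar0]; ring
    _ = (∑ j ∈ range m, Fbar j) / w := by rw [sum_Icc_one_add_eq_sum_range_add]; ring

/-- Stationary-delayed renewal set: the delay `D = Z 0` has distribution `F̄(d)/w` on
`{0,…,K}`, the gaps `Y_i = Z (i+1)` are i.i.d. with pmf `f`, all independent, and
`R = {D + Y₁ + ⋯ + Y_j : j ≥ 0}`. Then for every `1 ≤ m ≤ K`,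
`P(R ∩ {1,…,m} ≠ ∅) = (∑_{j=0}^{m−1} F̄(j)) / w`. -/
theorem stmt_9 {Ω : Type*} [MeasurableSpace Ω] (P : Measure Ω) [IsProbabilityMeasure P]
    (f : ℕ → ℝ) (hf_nonneg : ∀ k, 0 ≤ f k) (hf0 : f 0 = 0) (hf_sum : HasSum f 1)
    (Fbar : ℕ → ℝ) (hFbar : ∀ d, Fbar d = ∑' m : ℕ, if d < m then f m else 0)
    (K : ℕ) (w : ℝ) (hw : w = ∑ d ∈ range (K + 1), Fbar d)
    (Z : ℕ → Ω → ℕ) (hZ : ∀ i, Measurable (Z i))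
    (hindep : iIndepFun Z P)
    (hD : ∀ d : ℕ, d ≤ K → (P {ω | Z 0 ω = d}).toReal = Fbar d / w)
    (hDsupp : ∀ᵐ ω ∂P, Z 0 ω ≤ K)
    (hY : ∀ i k : ℕ, (P {ω | Z (i + 1) ω = k}).toReal = f k)
    (m : ℕ) (hm : 1 ≤ m) (hmK : m ≤ K) :
    (P {ω | ∃ k : ℕ, 1 ≤ k ∧ k ≤ m ∧
        ∃ j : ℕ, Z 0 ω + ∑ i ∈ range j, Z (i + 1) ω = k}).toReal
      = (∑ j ∈ range m, Fbar j) / w :=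
  stmt_9_general P f hf0 hf_sum Fbar hFbar K w Z hZ hindep hD hY m hmK
end

section
/- Let α ∈ (0,1) and let Γ_i = E₁ + ⋯ + E_i where (E_i)_{i≥1} are i.i.d. rate-1 exponential random variables. Then each expectation E[Γ_i^{−1/α}] is finite for integers i > 1/α, and there exist a constant C > 0 and m₀ ∈ ℕ such that for all m ≥ m₀, ∑_{i>m} E[Γ_i^{−1/α}] ≤ C·m^{1−1/α}. -/
/-!
For `n > p`, AM–GM applied to `Γₙ = E₁ + ⋯ + Eₙ` gives
`Γₙ ^ (-p) ≤ n ^ (-p) * ∏ⱼ Eⱼ ^ (-p/n)`, and by independence the right-hand side has expectation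
`n ^ (-p) * Γ(1 - p/n) ^ n`. Log-convexity of `Γ` between `Γ(1/2) = √π` and `Γ(1) = 1` bounds
`Γ(1 - p/n) ^ n` by `π ^ p` once `n ≥ 2p`, so with `p = 1/α` the tail is dominated by
`π ^ p * ∑_{n>m} n ^ (-p) ≤ π ^ p * m ^ (1-p) / (p - 1)`, an integral comparison.
-/

open MeasureTheory ProbabilityTheory Finset Real

open scoped ENNReal

lemma gammaMeasure_Iic_zero (a r : ℝ) : gammaMeasure a r (Set.Iic 0) = 0 := by
  rw [gammaMeasure, withDensity_apply _ measurableSet_Iic,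
    setLIntegral_congr Iio_ae_eq_Iic.symm]
  exact lintegral_gammaPDF_of_nonpos le_rfl

lemma ae_pos_gammaMeasure (a r : ℝ) : ∀ᵐ x ∂gammaMeasure a r, 0 < x := by
  rw [ae_iff]
  simp only [not_lt]
  exact gammaMeasure_Iic_zero a r

lemma lintegral_rpow_expMeasure {s : ℝ} (hs : 0 < s) :
    ∫⁻ x, ENNReal.ofReal (x ^ (s - 1)) ∂expMeasure 1 = ENNReal.ofReal (Gamma s) := by
  have hIoi : (expMeasure 1).restrict (Set.Ioi 0) = expMeasure 1 :=
    Measure.restrict_eq_self_of_ae_mem (ae_pos_gammaMeasure 1 1)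
  rw [← hIoi, expMeasure, gammaMeasure, setLIntegral_withDensity_eq_setLIntegral_mul _
      (f := gammaPDF 1 1) (measurable_gammaPDFReal 1 1).ennreal_ofReal (by fun_prop)
      measurableSet_Ioi,
    Gamma_eq_integral hs, ofReal_integral_eq_lintegral_ofReal (GammaIntegral_convergent hs)
      ((ae_restrict_iff' measurableSet_Ioi).2 (.of_forall fun x (hx : 0 < x) => by positivity))]
  refine setLIntegral_congr_fun measurableSet_Ioi fun x (hx : 0 < x) => ?_
  simp [gammaPDF_eq, hx.le, ← ENNReal.ofReal_mul (exp_pos _).le]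

lemma Real.Gamma_one_sub_le_pi_rpow {x : ℝ} (hx₀ : 0 ≤ x) (hx : x ≤ 1 / 2) :
    Gamma (1 - x) ≤ π ^ x := by
  have hconv := convexOn_log_Gamma.2 (show (1 / 2 : ℝ) ∈ Set.Ioi 0 by norm_num)
    (show (1 : ℝ) ∈ Set.Ioi 0 by norm_num) (by linarith : 0 ≤ 2 * x)
    (by linarith : 0 ≤ 1 - 2 * x) (by ring)
  have hpt : 2 * x * (1 / 2 : ℝ) + (1 - 2 * x) * 1 = 1 - x := by ring
  simp only [Function.comp_apply, smul_eq_mul, Gamma_one, log_one, mul_zero, add_zero,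
    Gamma_one_half_eq, log_sqrt pi_pos.le, hpt] at hconv
  calc Gamma (1 - x) = exp (log (Gamma (1 - x))) := (exp_log (Gamma_pos_of_pos (by linarith))).symm
    _ ≤ exp (log π * x) := exp_le_exp.2 (by linarith)
    _ = π ^ x := (rpow_def_of_pos pi_pos x).symm

lemma sum_range_rpow_neg_le {p : ℝ} (hp : 1 < p) {m : ℕ} (hm : 0 < m) (n : ℕ) :
    ∑ i ∈ range n, ((m + 1 + i : ℕ) : ℝ) ^ (-p) ≤ (m : ℝ) ^ (1 - p) / (p - 1) := by
  have hm' : (0 : ℝ) < m := by exact_mod_cast hm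
  have hanti : AntitoneOn (fun x : ℝ => x ^ (-p)) (Set.Icc m (m + n)) := fun x hx y _ hxy =>
    rpow_le_rpow_of_nonpos (hm'.trans_le hx.1) hxy (by linarith)
  have hint : IntegrableOn (fun x : ℝ => x ^ (-p)) (Set.Ioi m) :=
    integrableOn_Ioi_rpow_of_lt (by linarith) hm'
  calc ∑ i ∈ range n, ((m + 1 + i : ℕ) : ℝ) ^ (-p)
      = ∑ i ∈ range n, ((m : ℝ) + (i + 1 : ℕ)) ^ (-p) := by push_cast; ring_nf
    _ ≤ ∫ x in (m : ℝ)..m + n, x ^ (-p) := hanti.sum_le_integral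
    _ ≤ ∫ x in Set.Ioi (m : ℝ), x ^ (-p) := by
      rw [intervalIntegral.integral_of_le (by linarith [(n.cast_nonneg : (0 : ℝ) ≤ n)])]
      exact setIntegral_mono_set hint
        ((ae_restrict_iff' measurableSet_Ioi).2 (.of_forall fun x (hx : (m : ℝ) < x) =>
          rpow_nonneg (hm'.trans hx).le _)) Set.Ioc_subset_Ioi_self.eventuallyLE
    _ = (m : ℝ) ^ (1 - p) / (p - 1) := by
      rw [integral_Ioi_rpow_of_lt (by linarith) hm', neg_div, ← div_neg]
      ring_nf

lemma summable_rpow_neg_tail {p : ℝ} (hp : 1 < p) {m : ℕ} (hm : 0 < m) :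
    Summable (fun i : ℕ => ((m + 1 + i : ℕ) : ℝ) ^ (-p)) ∧
      ∑' i : ℕ, ((m + 1 + i : ℕ) : ℝ) ^ (-p) ≤ (m : ℝ) ^ (1 - p) / (p - 1) := by
  have hnonneg (i : ℕ) : 0 ≤ ((m + 1 + i : ℕ) : ℝ) ^ (-p) := by positivity
  exact ⟨summable_of_sum_range_le hnonneg (sum_range_rpow_neg_le hp hm),
    Real.tsum_le_of_sum_range_le hnonneg (sum_range_rpow_neg_le hp hm)⟩

lemma rpow_neg_sum_le_mul_prod {ι : Type*} {s : Finset ι} (hs : s.Nonempty) {x : ι → ℝ}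
    (hx : ∀ i ∈ s, 0 < x i) {p : ℝ} (hp : 0 ≤ p) :
    (∑ i ∈ s, x i) ^ (-p) ≤ (#s : ℝ) ^ (-p) * ∏ i ∈ s, x i ^ (-(p / #s)) := by
  have hcard : (0 : ℝ) < #s := by exact_mod_cast hs.card_pos
  set G := ∏ i ∈ s, x i ^ (#s : ℝ)⁻¹
  have hG : 0 < G := prod_pos fun i hi => rpow_pos_of_pos (hx i hi) _
  have hamgm : #s * G ≤ ∑ i ∈ s, x i := by
    have := geom_mean_le_arith_mean_weighted s (fun _ => (#s : ℝ)⁻¹) x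
      (fun _ _ => by positivity) (by simp [hcard.ne']) fun i hi => (hx i hi).le
    rw [← mul_sum] at this
    calc (#s : ℝ) * G ≤ #s * ((#s : ℝ)⁻¹ * ∑ i ∈ s, x i) := by gcongr
      _ = ∑ i ∈ s, x i := by field_simp
  have hGp : G ^ (-p) = ∏ i ∈ s, x i ^ (-(p / #s)) := by
    rw [← finsetProd_rpow s _ (fun i hi => (rpow_pos_of_pos (hx i hi) _).le)]
    refine prod_congr rfl fun i hi => ?_
    rw [← rpow_mul (hx i hi).le]
    ring_nf
  calc (∑ i ∈ s, x i) ^ (-p) ≤ (#s * G) ^ (-p) :=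
        rpow_le_rpow_of_nonpos (by positivity) hamgm (by linarith)
    _ = (#s : ℝ) ^ (-p) * ∏ i ∈ s, x i ^ (-(p / #s)) := by rw [mul_rpow hcard.le hG.le, hGp]

lemma Real.Gamma_one_sub_div_pow_le {p : ℝ} (hp : 0 ≤ p) {n : ℕ} (hn : 2 * p ≤ n) :
    Gamma (1 - p / n) ^ n ≤ π ^ p := by
  rcases n.eq_zero_or_pos with rfl | hn₀
  · obtain rfl : p = 0 := by rw [Nat.cast_zero] at hn; linarith
    simp
  have hn' : (0 : ℝ) < n := by exact_mod_cast hn₀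
  calc Gamma (1 - p / n) ^ n ≤ (π ^ (p / n)) ^ n :=
        pow_le_pow_left₀ (Gamma_pos_of_pos (by rw [sub_pos, div_lt_one hn']; linarith)).le
          (Gamma_one_sub_le_pi_rpow (by positivity) (by rw [div_le_iff₀ hn']; linarith)) n
    _ = π ^ p := by rw [← rpow_natCast, ← rpow_mul pi_pos.le, div_mul_cancel₀ _ hn'.ne']

lemma integrable_and_integral_le_of_lintegral_ofReal_le {Ω : Type*} [MeasurableSpace Ω]
    {P : Measure Ω} {f : Ω → ℝ} (hf : AEStronglyMeasurable f P) (hnn : 0 ≤ᵐ[P] f) {c : ℝ}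
    (hc : 0 ≤ c) (h : ∫⁻ ω, ENNReal.ofReal (f ω) ∂P ≤ ENNReal.ofReal c) :
    Integrable f P ∧ ∫ ω, f ω ∂P ≤ c :=
  ⟨⟨hf, (hasFiniteIntegral_iff_ofReal hnn).2 (h.trans_lt ENNReal.ofReal_lt_top)⟩, by
    rw [integral_eq_lintegral_of_nonneg_ae hnn hf]
    exact ENNReal.toReal_le_of_le_ofReal hc h⟩

section SumOfExponentials

variable {Ω ι : Type*} [MeasurableSpace Ω] {P : Measure Ω} {X : ι → Ω → ℝ}

lemma ae_pos_of_map_eq_expMeasure {Y : Ω → ℝ} (hY : Measurable Y)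
    (hlaw : P.map Y = expMeasure 1) : ∀ᵐ ω ∂P, 0 < Y ω :=
  (ae_map_iff hY.aemeasurable measurableSet_Ioi).1 (hlaw ▸ ae_pos_gammaMeasure 1 1)

lemma ae_forall_mem_pos_of_map_eq_expMeasure (hX : ∀ i, Measurable (X i))
    (hlaw : ∀ i, P.map (X i) = expMeasure 1) (s : Finset ι) : ∀ᵐ ω ∂P, ∀ j ∈ s, 0 < X j ω :=
  (Filter.eventually_all_finset s).2 fun j _ => ae_pos_of_map_eq_expMeasure (hX j) (hlaw j)

lemma rpow_neg_sum_ae_nonneg (hX : ∀ i, Measurable (X i))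
    (hlaw : ∀ i, P.map (X i) = expMeasure 1) (s : Finset ι) (p : ℝ) :
    0 ≤ᵐ[P] fun ω => (∑ j ∈ s, X j ω) ^ (-p) :=
  (ae_forall_mem_pos_of_map_eq_expMeasure hX hlaw s).mono
    fun _ hω => rpow_nonneg (sum_nonneg fun j hj => (hω j hj).le) _

lemma integral_rpow_neg_sum_nonneg (hX : ∀ i, Measurable (X i))
    (hlaw : ∀ i, P.map (X i) = expMeasure 1) (s : Finset ι) (p : ℝ) :
    0 ≤ ∫ ω, (∑ j ∈ s, X j ω) ^ (-p) ∂P :=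
  integral_nonneg_of_ae (rpow_neg_sum_ae_nonneg hX hlaw s p)

lemma lintegral_rpow_neg_sum_le (hX : ∀ i, Measurable (X i)) (hindep : iIndepFun X P)
    (hlaw : ∀ i, P.map (X i) = expMeasure 1) (s : Finset ι) {p : ℝ} (hp : 0 ≤ p)
    (hps : p < #s) :
    ∫⁻ ω, ENNReal.ofReal ((∑ j ∈ s, X j ω) ^ (-p)) ∂P ≤
      ENNReal.ofReal ((#s : ℝ) ^ (-p) * Gamma (1 - p / #s) ^ #s) := by
  have hs : s.Nonempty := card_pos.1 (by exact_mod_cast hp.trans_lt hps)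
  set q := p / #s
  have hq : q < 1 := (div_lt_one (hp.trans_lt hps)).2 hps
  have hmeas : Measurable fun x : ℝ => ENNReal.ofReal (x ^ (-q)) := by fun_prop
  have hmoment (j : ι) :
      ∫⁻ ω, ENNReal.ofReal (X j ω ^ (-q)) ∂P = ENNReal.ofReal (Gamma (1 - q)) := by
    rw [← lintegral_map hmeas (hX j), hlaw j, ← lintegral_rpow_expMeasure (by linarith)]
    ring_nf
  calc _ ≤ ∫⁻ ω, ENNReal.ofReal ((#s : ℝ) ^ (-p)) * ∏ j ∈ s, ENNReal.ofReal (X j ω ^ (-q)) ∂P := by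
        refine lintegral_mono_ae ((ae_forall_mem_pos_of_map_eq_expMeasure hX hlaw s).mono
          fun ω hω => ?_)
        rw [← ENNReal.ofReal_prod_of_nonneg fun j hj => (rpow_pos_of_pos (hω j hj) _).le,
          ← ENNReal.ofReal_mul (by positivity)]
        exact ENNReal.ofReal_le_ofReal (rpow_neg_sum_le_mul_prod hs hω hp)
    _ = ENNReal.ofReal ((#s : ℝ) ^ (-p)) * ∏ j ∈ s, ∫⁻ ω, ENNReal.ofReal (X j ω ^ (-q)) ∂P := by
        rw [lintegral_const_mul _ (by fun_prop), lintegral_prod_eq_prod_lintegral_of_indepFun s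
          (fun j ω => ENNReal.ofReal (X j ω ^ (-q))) (hindep.comp _ fun _ => hmeas)
          fun j => hmeas.comp (hX j)]
    _ = _ := by
        rw [prod_congr rfl fun j _ => hmoment j, prod_const,
          ← ENNReal.ofReal_pow (Gamma_pos_of_pos (by linarith)).le,
          ← ENNReal.ofReal_mul (by positivity)]

lemma integrable_rpow_neg_sum_and_integral_le (hX : ∀ i, Measurable (X i))
    (hindep : iIndepFun X P) (hlaw : ∀ i, P.map (X i) = expMeasure 1) (s : Finset ι) {p : ℝ}
    (hp : 0 ≤ p) (hps : p < #s) :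
    Integrable (fun ω => (∑ j ∈ s, X j ω) ^ (-p)) P ∧
      ∫ ω, (∑ j ∈ s, X j ω) ^ (-p) ∂P ≤ (#s : ℝ) ^ (-p) * Gamma (1 - p / #s) ^ #s := by
  have hq : 0 < 1 - p / #s := by rw [sub_pos, div_lt_one (hp.trans_lt hps)]; exact hps
  exact integrable_and_integral_le_of_lintegral_ofReal_le
    ((s.measurable_sum fun j _ => hX j).pow_const _).aestronglyMeasurable
    (rpow_neg_sum_ae_nonneg hX hlaw s p) (by have := Gamma_pos_of_pos hq; positivity)
    (lintegral_rpow_neg_sum_le hX hindep hlaw s hp hps)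

lemma integral_rpow_neg_sum_le_pi_rpow (hX : ∀ i, Measurable (X i))
    (hindep : iIndepFun X P) (hlaw : ∀ i, P.map (X i) = expMeasure 1) (s : Finset ι) {p : ℝ}
    (hp : 0 < p) (hps : 2 * p ≤ #s) :
    ∫ ω, (∑ j ∈ s, X j ω) ^ (-p) ∂P ≤ π ^ p * (#s : ℝ) ^ (-p) := by
  calc _ ≤ (#s : ℝ) ^ (-p) * Gamma (1 - p / #s) ^ #s :=
        (integrable_rpow_neg_sum_and_integral_le hX hindep hlaw s hp.le (by linarith)).2
    _ ≤ (#s : ℝ) ^ (-p) * π ^ p := by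
        gcongr
        exact Gamma_one_sub_div_pow_le hp.le hps
    _ = π ^ p * (#s : ℝ) ^ (-p) := mul_comm _ _

end SumOfExponentials

theorem stmt_15_general {Ω : Type*} [MeasurableSpace Ω] (P : Measure Ω)
    (α : ℝ) (hα : α ∈ Set.Ioo (0 : ℝ) 1)
    (E : ℕ → Ω → ℝ) (hE : ∀ i, Measurable (E i))
    (hindep : iIndepFun E P)
    (hexp : ∀ i, Measure.map (E i) P = expMeasure 1) :
    (∀ i : ℕ, 1 / α < (i : ℝ) →
      Integrable (fun ω => (∑ j ∈ range i, E j ω) ^ (-(1 / α))) P) ∧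
    ∃ C : ℝ, 0 < C ∧ ∃ m₀ : ℕ, ∀ m : ℕ, m₀ ≤ m →
      Summable (fun i : ℕ =>
        ∫ ω, (∑ j ∈ range (m + 1 + i), E j ω) ^ (-(1 / α)) ∂P) ∧
      (∑' i : ℕ, ∫ ω, (∑ j ∈ range (m + 1 + i), E j ω) ^ (-(1 / α)) ∂P)
        ≤ C * (m : ℝ) ^ (1 - 1 / α) := by
  obtain ⟨hα₀, hα₁⟩ := hα
  set p := 1 / α
  have hp : 1 < p := by rw [lt_div_iff₀ hα₀]; linarith
  refine ⟨fun i hi => (integrable_rpow_neg_sum_and_integral_le hE hindep hexp (range i)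
    (by linarith) (by simpa using hi)).1, π ^ p / (p - 1), div_pos (by positivity) (by linarith),
    ⌈2 * p⌉₊, fun m hm => ?_⟩
  have hm' : 2 * p ≤ m := (Nat.le_ceil _).trans (by exact_mod_cast hm)
  have hbound (i : ℕ) : ∫ ω, (∑ j ∈ range (m + 1 + i), E j ω) ^ (-p) ∂P ≤
      π ^ p * ((m + 1 + i : ℕ) : ℝ) ^ (-p) := by
    simpa using integral_rpow_neg_sum_le_pi_rpow hE hindep hexp (range (m + 1 + i))
      (by linarith) (by rw [card_range]; push_cast; linarith [(i.cast_nonneg : (0 : ℝ) ≤ i)])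
  have hm₀ : 0 < m := by exact_mod_cast (show (0 : ℝ) < m by linarith)
  obtain ⟨htail, htail_le⟩ := summable_rpow_neg_tail hp hm₀
  have hsum := (htail.mul_left (π ^ p)).of_nonneg_of_le
    (fun i => integral_rpow_neg_sum_nonneg hE hexp _ p) hbound
  refine ⟨hsum, ?_⟩
  calc _ ≤ ∑' i : ℕ, π ^ p * ((m + 1 + i : ℕ) : ℝ) ^ (-p) :=
        hsum.tsum_le_tsum hbound (htail.mul_left _)
    _ = π ^ p * ∑' i : ℕ, ((m + 1 + i : ℕ) : ℝ) ^ (-p) := tsum_mul_left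
    _ ≤ π ^ p * ((m : ℝ) ^ (1 - p) / (p - 1)) := by gcongr
    _ = π ^ p / (p - 1) * (m : ℝ) ^ (1 - p) := by ring

/-- If `Γ_i = E₁ + ⋯ + E_i` with `(E_i)` i.i.d. rate-1 exponential and `α ∈ (0,1)`, then
`E[Γ_i^(−1/α)]` is finite for integers `i > 1/α`, and there are `C > 0` and `m₀` such that
for all `m ≥ m₀`, `∑_{i>m} E[Γ_i^(−1/α)] ≤ C m^(1−1/α)`. -/
theorem stmt_15 {Ω : Type*} [MeasurableSpace Ω] (P : Measure Ω) [IsProbabilityMeasure P]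
    (α : ℝ) (hα : α ∈ Set.Ioo (0 : ℝ) 1)
    (E : ℕ → Ω → ℝ) (hE : ∀ i, Measurable (E i))
    (hindep : iIndepFun E P)
    (hexp : ∀ i, Measure.map (E i) P = expMeasure 1) :
    (∀ i : ℕ, 1 / α < (i : ℝ) →
      Integrable (fun ω => (∑ j ∈ range i, E j ω) ^ (-(1 / α))) P) ∧
    ∃ C : ℝ, 0 < C ∧ ∃ m₀ : ℕ, ∀ m : ℕ, m₀ ≤ m →
      Summable (fun i : ℕ =>
        ∫ ω, (∑ j ∈ range (m + 1 + i), E j ω) ^ (-(1 / α)) ∂P) ∧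
      (∑' i : ℕ, ∫ ω, (∑ j ∈ range (m + 1 + i), E j ω) ^ (-(1 / α)) ∂P)
        ≤ C * (m : ℝ) ^ (1 - 1 / α) :=
  stmt_15_general P α hα E hE hindep hexp
end

section
/- Let (Ω, F, P) be a probability space, T : Ω → Ω a measure-preserving map, X₀ : Ω → [0,∞) measurable with P(X₀ > x) > 0 for every x ∈ ℝ, and X_k = X₀ ∘ T^k for k ≥ 1. Suppose that for every integer j ≥ 1 the limit p_j := lim_{x→∞} P(X₁ ≤ x, …, X_j ≤ x | X₀ > x) exists, and set p₀ = 1. Then for every integer d ≥ 1, lim_{x→∞} P(max_{1≤k≤d} X_k > x) / P(X₀ > x) = ∑_{j=0}^{d−1} p_j. -/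
/-!
Write `E = {X₀ > x}` and `A_d` for the event that the orbit enters `E` at one of the times
`1, …, d`. Since `A_{d+1} = T⁻¹(E ∪ A_d)` and `T` preserves `P`,
`P(A_{d+1}) = P(E ∪ A_d) = P(A_d) + P(E \ A_d)`, and `E \ A_m` is exactly the event
`{X₀ > x, X₁ ≤ x, …, X_m ≤ x}`. Hence `P(A_d) / P(E)` is the finite sum of the conditional
probabilities whose limits are the `p_m`.
-/

open MeasureTheory Filter Finset

namespace Function

variable {Ω : Type*} {T : Ω → Ω} {E : Set Ω}

def hitsWithin (T : Ω → Ω) (E : Set Ω) (d : ℕ) : Set Ω :=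
  ⋃ k ∈ range d, T^[k + 1] ⁻¹' E

@[simp]
theorem hitsWithin_zero (T : Ω → Ω) (E : Set Ω) : hitsWithin T E 0 = ∅ := by
  simp [hitsWithin]

theorem measurableSet_hitsWithin [MeasurableSpace Ω] (hT : Measurable T) (hE : MeasurableSet E)
    (d : ℕ) :
    MeasurableSet (hitsWithin T E d) :=
  Finset.measurableSet_biUnion _ fun k _ => (hT.iterate (k + 1)) hE

theorem hitsWithin_succ (T : Ω → Ω) (E : Set Ω) (d : ℕ) :
    hitsWithin T E (d + 1) = T ⁻¹' (E ∪ hitsWithin T E d) := by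
  ext ω
  simp only [hitsWithin, Set.mem_iUnion, Set.mem_preimage, Set.mem_union, mem_range, exists_prop,
    Nat.exists_lt_succ_left, iterate_succ_apply]
  rfl

theorem measure_hitsWithin [MeasurableSpace Ω] {μ : Measure Ω} (hT : MeasurePreserving T μ μ)
    (hE : MeasurableSet E) (d : ℕ) :
    μ (hitsWithin T E d) = ∑ m ∈ range d, μ (E \ hitsWithin T E m) := by
  induction d with
  | zero => simp
  | succ d ih =>
    have hA := measurableSet_hitsWithin hT.measurable hE d
    rw [hitsWithin_succ, hT.measure_preimage (hE.union hA).nullMeasurableSet, Set.union_comm,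
      ← Set.union_sdiff_self, measure_union Set.disjoint_sdiff_right (hE.diff hA), ih,
      sum_range_succ]

end Function

open Function

section Exceedances

variable {Ω : Type*} (T : Ω → Ω) (X₀ : Ω → ℝ) (x : ℝ)

theorem setOf_exists_iterate_gt_eq_hitsWithin (d : ℕ) :
    {ω | ∃ k : ℕ, 1 ≤ k ∧ k ≤ d ∧ X₀ (T^[k] ω) > x} = hitsWithin T {ω | X₀ ω > x} d := by
  ext ω
  simp only [hitsWithin, Set.mem_ofPred_eq, Set.mem_iUnion, Set.mem_preimage, mem_range,
    exists_prop]
  constructor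
  · rintro ⟨k, hk₁, hkd, hk⟩
    exact ⟨k - 1, by omega, by rwa [Nat.sub_add_cancel hk₁]⟩
  · rintro ⟨k, hkd, hk⟩
    exact ⟨k + 1, by omega, by omega, hk⟩

theorem setOf_forall_iterate_le_eq_diff_hitsWithin (m : ℕ) :
    {ω | (∀ k : ℕ, 1 ≤ k → k ≤ m → X₀ (T^[k] ω) ≤ x) ∧ X₀ ω > x} =
      {ω | X₀ ω > x} \ hitsWithin T {ω | X₀ ω > x} m := by
  rw [← setOf_exists_iterate_gt_eq_hitsWithin]
  ext ω
  simp only [Set.mem_ofPred_eq, Set.mem_sdiff, not_exists, not_and, not_lt]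
  exact and_comm

theorem measure_exists_iterate_gt [MeasurableSpace Ω] {P : Measure Ω}
    (hT : MeasurePreserving T P P) (hX₀ : Measurable X₀) (d : ℕ) :
    P {ω | ∃ k : ℕ, 1 ≤ k ∧ k ≤ d ∧ X₀ (T^[k] ω) > x} =
      ∑ m ∈ range d, P {ω | (∀ k : ℕ, 1 ≤ k → k ≤ m → X₀ (T^[k] ω) ≤ x) ∧ X₀ ω > x} := by
  simp only [setOf_exists_iterate_gt_eq_hitsWithin, setOf_forall_iterate_le_eq_diff_hitsWithin]
  exact measure_hitsWithin hT (measurableSet_lt measurable_const hX₀) d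

end Exceedances

theorem stmt_19_general {Ω : Type*} [MeasurableSpace Ω] (P : Measure Ω) [IsProbabilityMeasure P]
    (T : Ω → Ω) (hT : MeasurePreserving T P P)
    (X₀ : Ω → ℝ) (hX₀ : Measurable X₀)
    (hX₀tail : ∀ x : ℝ, 0 < P {ω | X₀ ω > x})
    (p : ℕ → ℝ) (hp0 : p 0 = 1)
    (hp : ∀ j : ℕ, 1 ≤ j →
      Tendsto (fun x : ℝ =>
          (P {ω | (∀ k : ℕ, 1 ≤ k → k ≤ j → X₀ (T^[k] ω) ≤ x) ∧ X₀ ω > x}).toReal /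
            (P {ω | X₀ ω > x}).toReal)
        atTop (nhds (p j)))
    (d : ℕ) :
    Tendsto (fun x : ℝ =>
        (P {ω | ∃ k : ℕ, 1 ≤ k ∧ k ≤ d ∧ X₀ (T^[k] ω) > x}).toReal /
          (P {ω | X₀ ω > x}).toReal)
      atTop (nhds (∑ j ∈ range d, p j)) := by
  simp_rw [measure_exists_iterate_gt T X₀ _ hT hX₀,
    ENNReal.toReal_sum fun _ _ => measure_ne_top P _, sum_div]
  refine tendsto_finsetSum _ fun m _ => ?_
  rcases Nat.eq_zero_or_pos m with rfl | hm
  · have hone : ∀ x : ℝ,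
        (P {ω | (∀ k : ℕ, 1 ≤ k → k ≤ 0 → X₀ (T^[k] ω) ≤ x) ∧ X₀ ω > x}).toReal /
          (P {ω | X₀ ω > x}).toReal = 1 := fun x => by
      rw [setOf_forall_iterate_le_eq_diff_hitsWithin, hitsWithin_zero, Set.sdiff_empty]
      exact div_self (ENNReal.toReal_pos (hX₀tail x).ne' (measure_ne_top P _)).ne'
    simpa only [hone, hp0] using tendsto_const_nhds
  · exact hp m hm

/-- Fixed-block-size extremal asymptotics: for a stationary nonnegative sequence
`X_k = X₀ ∘ T^k` with `P(X₀ > x) > 0` for all `x`, if for each `j ≥ 1` the limit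
`p_j = lim_{x→∞} P(X₁ ≤ x, …, X_j ≤ x ∣ X₀ > x)` exists and `p₀ = 1`, then for every
`d ≥ 1`, `P(max_{1≤k≤d} X_k > x) / P(X₀ > x) → ∑_{j=0}^{d−1} p_j` as `x → ∞`. -/
theorem stmt_19 {Ω : Type*} [MeasurableSpace Ω] (P : Measure Ω) [IsProbabilityMeasure P]
    (T : Ω → Ω) (hT : MeasurePreserving T P P)
    (X₀ : Ω → ℝ) (hX₀ : Measurable X₀) (hX₀nonneg : ∀ ω, 0 ≤ X₀ ω)
    (hX₀tail : ∀ x : ℝ, 0 < P {ω | X₀ ω > x})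
    (p : ℕ → ℝ) (hp0 : p 0 = 1)
    (hp : ∀ j : ℕ, 1 ≤ j →
      Tendsto (fun x : ℝ =>
          (P {ω | (∀ k : ℕ, 1 ≤ k → k ≤ j → X₀ (T^[k] ω) ≤ x) ∧ X₀ ω > x}).toReal /
            (P {ω | X₀ ω > x}).toReal)
        atTop (nhds (p j)))
    (d : ℕ) (hd : 1 ≤ d) :
    Tendsto (fun x : ℝ =>
        (P {ω | ∃ k : ℕ, 1 ≤ k ∧ k ≤ d ∧ X₀ (T^[k] ω) > x}).toReal /
          (P {ω | X₀ ω > x}).toReal)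
      atTop (nhds (∑ j ∈ range d, p j)) :=
  stmt_19_general P T hT X₀ hX₀ hX₀tail p hp0 hp d
end
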